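/- arXiv:1812.11769 — 5 statements merged into one kernel-verified Lean document; each statement's English description precedes it below -/
import Mathlib

section
/- For m,n ≥ 1, the polynomial f_{m,n}(r) = (r-1)(r^{m+n+1} - 1) - 2r(r^m + r^n) has exactly one real root in the interval (1,∞). -/
/-- Core uniqueness argument in abstract form: two roots `r < s` lead to a contradiction. -/
lemma f_mn_core (r s a b c d : ℝ) (hr : 1 < r) (hrs : r < s)
    (ha : 0 < a) (hb : 0 < b)
    (ha1 : 1 < a * b * r)
    (hac : a ≤ c) (hbd : b ≤ d)
    (h1 : (r - 1) * (a * b * r - 1) = 2 * (a * r + b * r))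
    (h2 : (s - 1) * (c * d * s - 1) = 2 * (c * s + d * s)) : False := by
  have hs : 1 < s := hr.trans hrs
  have hr0 : 0 < r := by linarith
  have hs0 : 0 < s := by linarith
  have hc : 0 < c := lt_of_lt_of_le ha hac
  have hd : 0 < d := lt_of_lt_of_le hb hbd
  have hDrs : a * r + b * r ≤ c * s + d * s := by nlinarith
  have k1 : 0 ≤ (d - b) * (a * c * r * s) := by
    apply mul_nonneg (by linarith) (by positivity)
  have k2 : 0 ≤ (c - a) * (b * d * r * s) := by
    apply mul_nonneg (by linarith) (by positivity)
  have key1 : (a * b * r) * (c * s + d * s) ≤ (c * d * s) * (a * r + b * r) := by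
    nlinarith [k1, k2]
  have key2 : (a * b * r - 1) * (c * s + d * s) ≤ (c * d * s - 1) * (a * r + b * r) := by
    nlinarith [key1, hDrs]
  have hposA : 0 < (a * b * r - 1) * (c * s + d * s) := by
    apply mul_pos (by linarith) (by positivity)
  have final : (r - 1) * ((a * b * r - 1) * (c * s + d * s)) <
      (s - 1) * ((c * d * s - 1) * (a * r + b * r)) := by
    have t1 : (r - 1) * ((a * b * r - 1) * (c * s + d * s)) <
        (s - 1) * ((a * b * r - 1) * (c * s + d * s)) :=
      mul_lt_mul_of_pos_right (by linarith) hposA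
    have t2 : (s - 1) * ((a * b * r - 1) * (c * s + d * s)) ≤
        (s - 1) * ((c * d * s - 1) * (a * r + b * r)) :=
      mul_le_mul_of_nonneg_left key2 (by linarith)
    linarith
  have e1 : (r - 1) * ((a * b * r - 1) * (c * s + d * s)) =
      (2 * (a * r + b * r)) * (c * s + d * s) := by rw [← mul_assoc, h1]
  have e2 : (s - 1) * ((c * d * s - 1) * (a * r + b * r)) =
      (2 * (c * s + d * s)) * (a * r + b * r) := by rw [← mul_assoc, h2]
  rw [e1, e2] at final
  nlinarith [final]

/-- For `m, n ≥ 1`, the polynomial `f_{m,n}(r) = (r-1)(r^{m+n+1}-1) - 2r(r^m + r^n)`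
has exactly one real root in `(1,∞)`. -/
theorem f_mn_unique_root (m n : ℕ) (hm : 1 ≤ m) (hn : 1 ≤ n) :
    ∃! r : ℝ, 1 < r ∧
      (r - 1) * (r ^ (m + n + 1) - 1) - 2 * r * (r ^ m + r ^ n) = 0 := by
  set f : ℝ → ℝ := fun r => (r - 1) * (r ^ (m + n + 1) - 1) - 2 * r * (r ^ m + r ^ n) with hf
  -- convert a root into the normalized equation
  have conv : ∀ r : ℝ, f r = 0 →
      (r - 1) * (r ^ m * r ^ n * r - 1) = 2 * (r ^ m * r + r ^ n * r) := by
    intro r h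
    have e : r ^ (m + n + 1) = r ^ m * r ^ n * r := by rw [pow_succ, pow_add]
    simp only [hf] at h
    rw [e] at h
    linear_combination h
  have gt1 : ∀ r : ℝ, 1 < r → 1 < r ^ m * r ^ n * r := by
    intro r hr
    have : (1 : ℝ) < r ^ (m + n + 1) := one_lt_pow₀ hr (by omega)
    rwa [pow_succ, pow_add] at this
  -- core contradiction for two distinct roots
  have core : ∀ r s : ℝ, 1 < r → r < s → f r = 0 → f s = 0 → False := by
    intro r s hr hrs h1 h2
    have hr0 : (0 : ℝ) ≤ r := by linarith
    exact f_mn_core r s (r ^ m) (r ^ n) (s ^ m) (s ^ n) hr hrs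
      (pow_pos (by linarith) m) (pow_pos (by linarith) n)
      (gt1 r hr)
      (pow_le_pow_left₀ hr0 hrs.le m) (pow_le_pow_left₀ hr0 hrs.le n)
      (conv r h1) (conv s h2)
  -- existence via IVT on [1,5]
  have hcont : ContinuousOn f (Set.Icc 1 5) := by
    apply Continuous.continuousOn
    fun_prop
  have hf1 : f 1 = -4 := by simp [hf]; norm_num
  have hf5 : 0 < f 5 := by
    have ha : (5 : ℝ) ≤ 5 ^ m := le_self_pow₀ (by norm_num) (by omega)
    have hb : (5 : ℝ) ≤ 5 ^ n := le_self_pow₀ (by norm_num) (by omega)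
    have e : (5 : ℝ) ^ (m + n + 1) = 5 ^ m * 5 ^ n * 5 := by rw [pow_succ, pow_add]
    have hma : (0:ℝ) < 5 ^ m := pow_pos (by norm_num) m
    have hnb : (0:ℝ) < 5 ^ n := pow_pos (by norm_num) n
    have p1 : (5:ℝ) ^ m * 5 ≤ 5 ^ m * 5 ^ n := mul_le_mul_of_nonneg_left hb hma.le
    have p2 : (5:ℝ) ^ n * 5 ≤ 5 ^ n * 5 ^ m := mul_le_mul_of_nonneg_left ha hnb.le
    simp only [hf]
    rw [e]
    nlinarith [p1, p2, ha, hb]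
  obtain ⟨x, hx, hfx⟩ := intermediate_value_Ioo (by norm_num : (1:ℝ) ≤ 5) hcont
    (show (0:ℝ) ∈ Set.Ioo (f 1) (f 5) by constructor <;> [rw [hf1]; skip] <;> [norm_num; exact hf5])
  refine ⟨x, ⟨hx.1, hfx⟩, ?_⟩
  rintro y ⟨hy1, hy2⟩
  rcases lt_trichotomy y x with h | h | h
  · exact absurd (core y x hy1 h hy2 hfx) (by simp)
  · exact h
  · exact absurd (core x y hx.1 h hfx hy2) (by simp)
end

section
/- For 1 ≤ m ≤ n-2, the polynomial g_{m,n}(r) = (r-1)(r^{m+n+1} + 1) + 2r(r^m - r^n) has exactly one real root in the interval (1,∞). -/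
/-!
Since `2r(r^m - r^n) = -2(r - 1) ∑_{j=m+1}^{n} r^j`, we have `g_{m,n}(r) = (r - 1) r^n u(r)`
with `u(r) = r^{m+1} + r^{-n} - 2 ∑_{j=m+1}^{n} r^{j-n}` (`GMN.normalizedG`). On `[1, ∞)` the
function `u` is strictly increasing: in `u'` the term `-n r^{-n-1}` is outweighed by `(m+1) r^m`
together with the contribution `2(n-m-1) r^{m-n}` of `j = m + 1`.
As `u(1) = 2 - 2(n - m) < 0` and `u(r) → ∞`, `u` has exactly one zero in `(1, ∞)`.
-/

open Finset

namespace GMN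

noncomputable def normalizedG (m n : ℕ) (r : ℝ) : ℝ :=
  r ^ (m + 1) + r ^ (-(n : ℤ)) - 2 * ∑ j ∈ Ico (m + 1) (n + 1), r ^ ((j : ℤ) - n)

noncomputable def normalizedG' (m n : ℕ) (r : ℝ) : ℝ :=
  (m + 1) * r ^ m - n * r ^ (-(n : ℤ) - 1)
    + 2 * ∑ j ∈ Ico (m + 1) (n + 1), ((n : ℝ) - j) * r ^ ((j : ℤ) - n - 1)

variable {m n : ℕ} {r : ℝ}

theorem sub_one_mul_pow_mul_normalizedG (hmn : m ≤ n) (hr : r ≠ 0) :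
    (r - 1) * r ^ n * normalizedG m n r
      = (r - 1) * (r ^ (m + n + 1) + 1) + 2 * r * (r ^ m - r ^ n) := by
  have hsum : r ^ n * ∑ j ∈ Ico (m + 1) (n + 1), r ^ ((j : ℤ) - n)
      = ∑ j ∈ Ico (m + 1) (n + 1), r ^ j := by
    rw [mul_sum]
    refine sum_congr rfl fun j _ => ?_
    rw [← zpow_natCast r n, ← zpow_add₀ hr, add_sub_cancel, zpow_natCast]
  have hinv : r ^ n * r ^ (-(n : ℤ)) = 1 := by
    rw [← zpow_natCast r n, ← zpow_add₀ hr, add_neg_cancel, zpow_zero]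
  have hgeom := geom_sum_Ico_mul r (show m + 1 ≤ n + 1 by omega)
  calc (r - 1) * r ^ n * normalizedG m n r
      = (r - 1) * (r ^ n * r ^ (m + 1) + r ^ n * r ^ (-(n : ℤ))
          - 2 * (r ^ n * ∑ j ∈ Ico (m + 1) (n + 1), r ^ ((j : ℤ) - n))) := by
        rw [normalizedG]; ring
    _ = _ := by rw [hsum, hinv]; linear_combination (-2) * hgeom

theorem hasDerivAt_normalizedG (hr : r ≠ 0) :
    HasDerivAt (normalizedG m n) (normalizedG' m n r) r := by
  have hpow := (hasDerivAt_pow (m + 1) r).add (hasDerivAt_zpow (-(n : ℤ)) r (Or.inl hr))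
  have hsum := (HasDerivAt.fun_sum (u := Ico (m + 1) (n + 1))
    fun (j : ℕ) _ => hasDerivAt_zpow ((j : ℤ) - n) r (Or.inl hr)).const_mul 2
  refine (hpow.sub hsum).congr_deriv ?_
  simp only [normalizedG', mul_sum]
  push_cast
  rw [sub_eq_add_neg _ (∑ _ ∈ _, _), ← sum_neg_distrib]
  congr 1
  · ring
  · exact sum_congr rfl fun j _ => by ring

theorem normalizedG'_pos (hmn : m + 2 ≤ n) (hr : 1 < r) : 0 < normalizedG' m n r := by
  have hr0 : 0 < r := one_pos.trans hr
  set t := r ^ (-(n : ℤ) - 1)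
  have ht : 0 < t := zpow_pos hr0 _
  have hn : (m : ℝ) + 2 ≤ n := by exact_mod_cast hmn
  have hrm : t ≤ r ^ m := by
    rw [← zpow_natCast]; exact zpow_le_zpow_right₀ hr.le (by omega)
  have hterm : ((n : ℝ) - (m + 1)) * t ≤ ((n : ℝ) - (m + 1)) * r ^ ((m : ℤ) + 1 - n - 1) :=
    mul_le_mul_of_nonneg_left (zpow_le_zpow_right₀ hr.le (by omega)) (by linarith)
  have hnonneg :
      ∀ j ∈ Ico (m + 1) (n + 1), 0 ≤ ((n : ℝ) - j) * r ^ ((j : ℤ) - n - 1) := by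
    intro j hj
    have : (j : ℝ) ≤ n := by exact_mod_cast Nat.lt_succ_iff.mp (mem_Ico.mp hj).2
    exact mul_nonneg (by linarith) (zpow_pos hr0 _).le
  have hsum := single_le_sum hnonneg
    (show m + 1 ∈ Ico (m + 1) (n + 1) by simp only [mem_Ico]; omega)
  push_cast at hsum
  rw [normalizedG']
  nlinarith

theorem strictMonoOn_normalizedG (hmn : m + 2 ≤ n) :
    StrictMonoOn (normalizedG m n) (Set.Ici 1) := by
  have hderiv (x : ℝ) (hx : 1 ≤ x) : HasDerivAt (normalizedG m n) (normalizedG' m n x) x :=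
    hasDerivAt_normalizedG (by positivity)
  refine strictMonoOn_of_deriv_pos (convex_Ici 1)
    (fun x hx => (hderiv x hx).continuousAt.continuousWithinAt) fun x hx => ?_
  rw [interior_Ici] at hx
  rw [(hderiv x hx.le).deriv]
  exact normalizedG'_pos hmn hx

theorem normalizedG_one_neg (hmn : m + 2 ≤ n) : normalizedG m n 1 < 0 := by
  simp only [normalizedG, one_pow, one_zpow, sum_const, Nat.card_Ico, nsmul_eq_mul, mul_one]
  have : (2 : ℝ) ≤ (n + 1 - (m + 1) : ℕ) := by
    exact_mod_cast (by omega : 2 ≤ n + 1 - (m + 1))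
  linarith

theorem pow_sub_le_normalizedG (hr : 1 ≤ r) : r ^ (m + 1) - 2 * n ≤ normalizedG m n r := by
  have hsum : ∑ j ∈ Ico (m + 1) (n + 1), r ^ ((j : ℤ) - n) ≤ n := by
    calc ∑ j ∈ Ico (m + 1) (n + 1), r ^ ((j : ℤ) - n)
        ≤ ∑ _j ∈ Ico (m + 1) (n + 1), (1 : ℝ) :=
          sum_le_sum fun j hj => zpow_le_one_of_nonpos₀ hr (by simp only [mem_Ico] at hj; omega)
      _ ≤ n := by
          rw [sum_const, Nat.card_Ico, nsmul_one]
          exact_mod_cast (by omega : n + 1 - (m + 1) ≤ n)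
  have hinv : 0 < r ^ (-(n : ℤ)) := zpow_pos (by positivity) _
  rw [normalizedG]
  linarith

theorem exists_normalizedG_eq_zero (hmn : m + 2 ≤ n) :
    ∃ r, 1 < r ∧ normalizedG m n r = 0 := by
  set R : ℝ := 2 * n + 1
  have hR : 1 ≤ R := by simp only [R]; linarith [Nat.cast_nonneg (α := ℝ) n]
  have hpos : 0 < normalizedG m n R := by
    have hRpow : R ≤ R ^ (m + 1) := le_self_pow₀ hR (by omega)
    linarith [pow_sub_le_normalizedG (m := m) (n := n) hR]
  have hcont : ContinuousOn (normalizedG m n) (Set.Icc 1 R) := fun x hx =>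
    (hasDerivAt_normalizedG (by linarith [hx.1])).continuousAt.continuousWithinAt
  obtain ⟨r, hr, hr0⟩ := intermediate_value_Ioo hR hcont ⟨normalizedG_one_neg hmn, hpos⟩
  exact ⟨r, hr.1, hr0⟩

theorem g_eq_zero_iff_normalizedG_eq_zero (hmn : m ≤ n) (hr : 1 < r) :
    (r - 1) * (r ^ (m + n + 1) + 1) + 2 * r * (r ^ m - r ^ n) = 0 ↔ normalizedG m n r = 0 := by
  have hr0 : r ≠ 0 := by positivity
  rw [← sub_one_mul_pow_mul_normalizedG hmn hr0, mul_eq_zero, mul_eq_zero, sub_eq_zero,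
    or_iff_right hr.ne', or_iff_right (pow_ne_zero n hr0)]

end GMN

open GMN in
theorem g_mn_unique_root_general (m n : ℕ) (hmn : m + 2 ≤ n) :
    ∃! r : ℝ, 1 < r ∧
      (r - 1) * (r ^ (m + n + 1) + 1) + 2 * r * (r ^ m - r ^ n) = 0 := by
  have hroot (r : ℝ) (hr : 1 < r) :=
    g_eq_zero_iff_normalizedG_eq_zero (m := m) (n := n) (by omega) hr
  obtain ⟨r, hr, hr0⟩ := exists_normalizedG_eq_zero hmn
  refine ⟨r, ⟨hr, (hroot r hr).2 hr0⟩, fun s ⟨hs, hs0⟩ => ?_⟩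
  exact (strictMonoOn_normalizedG hmn).injOn (Set.mem_Ici.2 hs.le) (Set.mem_Ici.2 hr.le)
    (((hroot s hs).1 hs0).trans hr0.symm)

/-- For `1 ≤ m ≤ n - 2`, the polynomial `g_{m,n}(r) = (r-1)(r^{m+n+1}+1) + 2r(r^m - r^n)`
has exactly one real root in `(1,∞)`. -/
theorem g_mn_unique_root (m n : ℕ) (hm : 1 ≤ m) (hmn : m + 2 ≤ n) :
    ∃! r : ℝ, 1 < r ∧
      (r - 1) * (r ^ (m + n + 1) + 1) + 2 * r * (r ^ m - r ^ n) = 0 :=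
  g_mn_unique_root_general m n hmn
end

section
/- For n ≥ 4, the polynomial f_n(x) = (x+1)^{n-4}(x^n - 2x^{n-1} - 2x + 1) has exactly one real root in (1,∞), and this root is a root of x^n - 2x^{n-1} - 2x + 1. -/
private lemma key_aux {x y a b : ℝ} (hx : 1 < x) (hxy : x < y)
    (ha : 0 < a) (hab : a < b) :
    b * y * y - a * x * x < 2 * x * y * (b * y - a * x) := by
  have hy : 1 < y := hx.trans hxy
  have h3 : a * (y - x) < b * y - a * x := by nlinarith
  have h4 : x < y * (2 * x - 1) := by nlinarith
  have hyx : (0 : ℝ) < y * (2 * x - 1) := by nlinarith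
  have h5 := mul_lt_mul_of_pos_left h3 hyx
  have h6 := mul_lt_mul_of_pos_right h4 (mul_pos ha (show (0:ℝ) < y - x by linarith))
  nlinarith [h5, h6]

private lemma key_ineq (k : ℕ) {x y : ℝ} (hx : 1 < x) (hxy : x < y) :
    y ^ (k + 3) - x ^ (k + 3) < 2 * x * y * (y ^ (k + 2) - x ^ (k + 2)) := by
  have hx0 : (0 : ℝ) < x := by linarith
  have ha : (0 : ℝ) < x ^ (k + 1) := by positivity
  have hab : x ^ (k + 1) < y ^ (k + 1) := pow_lt_pow_left₀ hxy hx0.le (by omega)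
  have h := key_aux hx hxy ha hab
  have e1 : y ^ (k + 3) - x ^ (k + 3) = y ^ (k+1) * y * y - x ^ (k+1) * x * x := by ring
  have e2 : y ^ (k + 2) - x ^ (k + 2) = y ^ (k+1) * y - x ^ (k+1) * x := by ring
  rw [e1, e2]
  exact h

private lemma g_root_unique (m : ℕ) (hm : 2 ≤ m) {x y : ℝ} (hx : 1 < x) (hxy : x < y)
    (hgx : x ^ (m + 2) - 2 * x ^ (m + 1) - 2 * x + 1 = 0)
    (hgy : y ^ (m + 2) - 2 * y ^ (m + 1) - 2 * y + 1 = 0) : False := by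
  obtain ⟨k, rfl⟩ : ∃ k, m = k + 2 := ⟨m - 2, by omega⟩
  have hy : 1 < y := hx.trans hxy
  have key := key_ineq k hx hxy
  have hpos : 0 < x ^ (k + 3) * y ^ (k + 3) * (y - x) := by
    have h1 : (0:ℝ) < y - x := by linarith
    have h2 : (0:ℝ) < x ^ (k + 3) := by positivity
    have h3 : (0:ℝ) < y ^ (k + 3) := by positivity
    exact mul_pos (mul_pos h2 h3) h1
  have hid : x ^ (k + 3) * y ^ (k + 3) * (y - x)
      + (2 * x * y * (y ^ (k + 2) - x ^ (k + 2)) - (y ^ (k + 3) - x ^ (k + 3))) = 0 := by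
    linear_combination x ^ (k + 3) * hgy - y ^ (k + 3) * hgx
  linarith

/-- For `n ≥ 4`, the polynomial `f_n(x) = (x+1)^{n-4}(x^n - 2x^{n-1} - 2x + 1)`
has exactly one real root in `(1,∞)`, and that root is a root of
`x^n - 2x^{n-1} - 2x + 1`. -/
theorem f_n_unique_root (n : ℕ) (hn : 4 ≤ n) :
    (∃! x : ℝ, 1 < x ∧
        (x + 1) ^ (n - 4) * (x ^ n - 2 * x ^ (n - 1) - 2 * x + 1) = 0) ∧
      ∀ x : ℝ, 1 < x →
        (x + 1) ^ (n - 4) * (x ^ n - 2 * x ^ (n - 1) - 2 * x + 1) = 0 →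
        x ^ n - 2 * x ^ (n - 1) - 2 * x + 1 = 0 := by
  obtain ⟨m, rfl⟩ : ∃ m, n = m + 2 := ⟨n - 2, by omega⟩
  have hm : 2 ≤ m := by omega
  have hsub : m + 2 - 1 = m + 1 := by omega
  -- the cofactor is positive on (1,∞)
  have hpos : ∀ x : ℝ, 1 < x → (0 : ℝ) < (x + 1) ^ (m + 2 - 4) := by
    intro x hx; positivity
  have hequiv : ∀ x : ℝ, 1 < x →
      ((x + 1) ^ (m + 2 - 4) * (x ^ (m + 2) - 2 * x ^ (m + 2 - 1) - 2 * x + 1) = 0 ↔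
        x ^ (m + 2) - 2 * x ^ (m + 1) - 2 * x + 1 = 0) := by
    intro x hx
    rw [hsub, mul_eq_zero]
    constructor
    · rintro (h | h)
      · exact absurd h (ne_of_gt (hpos x hx))
      · exact h
    · exact Or.inr
  -- existence via IVT
  set g : ℝ → ℝ := fun x => x ^ (m + 2) - 2 * x ^ (m + 1) - 2 * x + 1 with hg
  have hcont : Continuous g := by fun_prop
  have hg1 : g 1 = -2 := by simp [hg]; ring
  have hg3 : 0 < g 3 := by
    have h27 : (27 : ℝ) ≤ 3 ^ (m + 1) := by
      calc (27 : ℝ) = 3 ^ 3 := by norm_num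
      _ ≤ 3 ^ (m + 1) := pow_le_pow_right₀ (by norm_num) (by omega)
    have : g 3 = 3 ^ (m + 1) - 5 := by
      simp only [hg]
      ring
    rw [this]; linarith
  obtain ⟨c, hc, hgc⟩ : ∃ c ∈ Set.Icc (1 : ℝ) 3, g c = 0 := by
    have := intermediate_value_Icc (by norm_num : (1:ℝ) ≤ 3) hcont.continuousOn
    have h0 : (0 : ℝ) ∈ Set.Icc (g 1) (g 3) := by
      rw [hg1]; exact ⟨by norm_num, hg3.le⟩
    obtain ⟨c, hc, hgc⟩ := this h0
    exact ⟨c, hc, hgc⟩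
  have hc1 : 1 < c := by
    rcases eq_or_lt_of_le hc.1 with h | h
    · exfalso; rw [← h] at hgc; rw [hg1] at hgc; norm_num at hgc
    · exact h
  constructor
  · refine ⟨c, ⟨hc1, ?_⟩, ?_⟩
    · rw [hequiv c hc1]; exact hgc
    · rintro y ⟨hy1, hy⟩
      rw [hequiv y hy1] at hy
      by_contra hne
      rcases lt_or_gt_of_ne hne with h | h
      · exact g_root_unique m hm hy1 h hy hgc
      · exact g_root_unique m hm hc1 h hgc hy
  · intro x hx h
    rw [hequiv x hx] at h
    rw [hsub]; exact h
end

section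
/- Let r > 1 be a root of x^n - 2x^{n-1} - 2x + 1 for n ≥ 4. Define a_j = -r(r^j - 1) for 1 ≤ j < n-2, a_{n-2} = -(r^{n-1}-1)(r-1), and b_j = -r^{j+1}(r-1) for 1 ≤ j < n-2, b_{n-2} = -(r^{n-1}-1). Then a_j ≤ 0 and b_j ≤ 0 for all 1 ≤ j ≤ n-2, and a_{j+1} - a_j ≤ b_j for all 1 ≤ j ≤ n-3. -/
/-- The Dynnikov coordinates of the unstable foliation of `τ_n` lie in the
Dynnikov region `R^{(n)}`: all coordinates are nonpositive, and
`a_{j+1} - a_j ≤ b_j` for `1 ≤ j ≤ n-3`. -/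
theorem tau_n_coordinates_in_region (n : ℕ) (hn : 4 ≤ n) (r : ℝ) (hr : 1 < r)
    (hroot : r ^ n - 2 * r ^ (n - 1) - 2 * r + 1 = 0)
    (a b : ℕ → ℝ)
    (ha : ∀ j, 1 ≤ j → j < n - 2 → a j = -(r * (r ^ j - 1)))
    (ha' : a (n - 2) = -((r ^ (n - 1) - 1) * (r - 1)))
    (hb : ∀ j, 1 ≤ j → j < n - 2 → b j = -(r ^ (j + 1) * (r - 1)))
    (hb' : b (n - 2) = -(r ^ (n - 1) - 1)) :
    (∀ j, 1 ≤ j → j ≤ n - 2 → a j ≤ 0 ∧ b j ≤ 0) ∧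
      ∀ j, 1 ≤ j → j ≤ n - 3 → a (j + 1) - a j ≤ b j := by
  obtain ⟨k, rfl⟩ : ∃ k, n = k + 4 := ⟨n - 4, by omega⟩
  have h2 : k + 4 - 2 = k + 2 := by omega
  have h1 : k + 4 - 1 = k + 3 := by omega
  have h3 : k + 4 - 3 = k + 1 := by omega
  rw [h2] at ha ha' hb hb'
  rw [h1] at ha' hb' hroot
  have hr0 : (0:ℝ) < r := lt_trans one_pos hr
  have hpow : ∀ m : ℕ, (1:ℝ) ≤ r ^ m := fun m => one_le_pow₀ hr.le
  have hpos : ∀ m : ℕ, (0:ℝ) < r ^ m := fun m => pow_pos hr0 m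
  constructor
  · intro j hj1 hj2
    rw [h2] at hj2
    rcases lt_or_eq_of_le hj2 with h | h
    · rw [ha j hj1 h, hb j hj1 h]
      constructor
      · have := hpow j
        nlinarith
      · have := hpos (j + 1)
        nlinarith
    · subst h
      rw [ha', hb']
      have := hpow (k + 3)
      constructor
      · nlinarith
      · linarith
  · intro j hj1 hj2
    rw [h3] at hj2
    rcases lt_or_eq_of_le hj2 with h | h
    · have h' : j + 1 < k + 2 := by omega
      rw [ha j hj1 (by omega), ha (j + 1) (by omega) h', hb j hj1 (by omega)]
      ring_nf
      exact le_refl _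
    · subst h
      have e2 : a (k + 1 + 1) = -((r ^ (k + 3) - 1) * (r - 1)) := by
        rw [show k + 1 + 1 = k + 2 from rfl, ha']
      rw [e2, ha (k + 1) (by omega) (by omega), hb (k + 1) (by omega) (by omega)]
      have e3 : r ^ (k + 3) = r ^ (k + 1) * r ^ 2 := by ring
      have e4 : r ^ (k + 1 + 1) = r ^ (k + 1) * r := by ring
      have e5 : r ^ (k + 4) = r ^ (k + 1) * r ^ 3 := by ring
      rw [e3, e4]
      rw [e5, e3] at hroot
      nlinarith [hpos (k + 1)]
end

section
/- Let β₁,…,β_{n-1} and b₁,…,b_{n-2} be real numbers with b_i = (β_i - β_{i+1})/2 for each i. Suppose for each 1 ≤ i ≤ n-2 there exist reals a_i and m_i ≥ 0 with β_i = 2(|a_i| + max(b_i, 0) + m_i), and suppose m_i = 0 for at least one i. Then β₁ = 2·max_{1≤k≤n-2}[|a_k| + max(b_k, 0) + Σ_{j=1}^{k-1} b_j]. -/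
open Finset in
/-- Key computation in the proof of the inversion theorem for Dynnikov
coordinates: if `β_i = 2(|a_i| + max(b_i,0) + m_i)` with `m_i ≥ 0`, where
`b_i = (β_i - β_{i+1})/2`, and `m_i = 0` for some `i`, then
`β₁ = 2 · max_k [|a_k| + max(b_k,0) + Σ_{j<k} b_j]`. -/
theorem dynnikov_inversion_key (n : ℕ) (hn : 3 ≤ n) (β b a m : ℕ → ℝ)
    (hb : ∀ i, 1 ≤ i → i ≤ n - 2 → b i = (β i - β (i + 1)) / 2)
    (hm : ∀ i, 1 ≤ i → i ≤ n - 2 →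
      0 ≤ m i ∧ β i = 2 * (|a i| + max (b i) 0 + m i))
    (hzero : ∃ i, 1 ≤ i ∧ i ≤ n - 2 ∧ m i = 0) :
    β 1 = 2 * (Icc 1 (n - 2)).sup' (by simp [Finset.nonempty_Icc]; omega)
      (fun k => |a k| + max (b k) 0 + ∑ j ∈ Icc 1 (k - 1), b j) := by
  have hsum : ∀ k, 1 ≤ k → k ≤ n - 2 →
      ∑ j ∈ Icc 1 (k - 1), b j = (β 1 - β k) / 2 := by
    intro k
    induction k with
    | zero => omega
    | succ k ih =>
      intro _ hk
      rcases Nat.eq_or_lt_of_le (show 1 ≤ k + 1 from by omega) with h1 | h1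
      · simp [← h1]
      · have hk1 : 1 ≤ k := by omega
        have : ∑ j ∈ Icc 1 (k + 1 - 1), b j = (∑ j ∈ Icc 1 (k - 1), b j) + b k := by
          simp only [Nat.add_sub_cancel]
          rw [show k = (k - 1) + 1 from by omega, Finset.sum_Icc_succ_top (by omega)]
          congr 1 <;> omega
        rw [this, ih hk1 (by omega), hb k hk1 (by omega)]
        ring
  have hval : ∀ k, 1 ≤ k → k ≤ n - 2 →
      |a k| + max (b k) 0 + ∑ j ∈ Icc 1 (k - 1), b j = β 1 / 2 - m k := by
    intro k h1 h2
    have := (hm k h1 h2).2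
    rw [hsum k h1 h2]
    linarith
  have hne : (Icc 1 (n - 2)).Nonempty := by simp [Finset.nonempty_Icc]; omega
  have : (Icc 1 (n - 2)).sup'
      (by simp [Finset.nonempty_Icc]; omega)
      (fun k => |a k| + max (b k) 0 + ∑ j ∈ Icc 1 (k - 1), b j) = β 1 / 2 := by
    apply le_antisymm
    · apply Finset.sup'_le
      intro k hk
      rw [Finset.mem_Icc] at hk
      rw [hval k hk.1 hk.2]
      have := (hm k hk.1 hk.2).1
      linarith
    · obtain ⟨i, h1, h2, hm0⟩ := hzero
      have := Finset.le_sup' (f := fun k => |a k| + max (b k) 0 + ∑ j ∈ Icc 1 (k - 1), b j)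
        (Finset.mem_Icc.mpr ⟨h1, h2⟩)
      rw [hval i h1 h2, hm0] at this
      linarith
  rw [this]; ring
end
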